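/- arXiv:1003.2107 — 2 statements merged into one kernel-verified Lean document; each statement's English description precedes it below -/
import Mathlib

section
/- Let u : [0,∞) → ℝ be twice continuously differentiable with u and u'' bounded. Then sup_{x ≥ 0} |u'(x)|² ≤ 32 · (sup_{x ≥ 0} |u(x)|) · (sup_{x ≥ 0} |u''(x)|). -/
open Real Set

/-- Interpolation inequality on the half-line `[0,∞)`:
`sup_{x≥0} |u'(x)|² ≤ 32 (sup_{x≥0}|u|) (sup_{x≥0}|u''|)` for `u ∈ C²([0,∞))`
with `u`, `u''` bounded.  Here `u'` and `u''` are given as functions together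
with the assertion that they are the (one-sided) derivatives of `u` and `u'`
on `[0,∞)`, and continuity of `u''` expresses that `u` is `C²`. -/
theorem stmt_1 (u u' u'' : ℝ → ℝ)
    (hu' : ∀ x ∈ Ici (0 : ℝ), HasDerivWithinAt u (u' x) (Ici 0) x)
    (hu'' : ∀ x ∈ Ici (0 : ℝ), HasDerivWithinAt u' (u'' x) (Ici 0) x)
    (hcont : ContinuousOn u'' (Ici 0))
    (M0 M2 : ℝ)
    (h0 : ∀ x ∈ Ici (0 : ℝ), |u x| ≤ M0)
    (h2 : ∀ x ∈ Ici (0 : ℝ), |u'' x| ≤ M2) :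
    ∀ x ∈ Ici (0 : ℝ), (u' x) ^ 2 ≤ 32 * M0 * M2 := by
  have hM0 : 0 ≤ M0 := le_trans (abs_nonneg _) (h0 0 (by simp))
  have hM2 : 0 ≤ M2 := le_trans (abs_nonneg _) (h2 0 (by simp))
  -- key estimate: for all x ≥ 0 and h > 0, |u' x| ≤ 2*M0/h + M2*h
  have key : ∀ x ∈ Ici (0 : ℝ), ∀ h : ℝ, 0 < h → |u' x| ≤ 2 * M0 / h + M2 * h := by
    intro x hx h hh
    have hx0 : (0:ℝ) ≤ x := hx
    have hsub : Icc x (x + h) ⊆ Ici (0:ℝ) := fun t ht => le_trans hx0 ht.1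
    -- Lipschitz bound on u'
    have lip : ∀ t ∈ Icc x (x + h), |u' t - u' x| ≤ M2 * h := by
      intro t ht
      have := Convex.norm_image_sub_le_of_norm_hasDerivWithin_le
        (f := u') (f' := u'') (s := Ici (0:ℝ)) hu''
        (fun y hy => by simpa using h2 y hy) (convex_Ici 0) hx (hsub ht)
      have h1 : ‖u' t - u' x‖ ≤ M2 * ‖t - x‖ := this
      have h2' : ‖t - x‖ ≤ h := by
        rw [Real.norm_eq_abs, abs_of_nonneg (by linarith [ht.1])]
        linarith [ht.2]
      calc |u' t - u' x| ≤ M2 * ‖t - x‖ := h1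
        _ ≤ M2 * h := by nlinarith [h2', hM2]
    -- apply MVT to g t = u t - t * u' x on Icc x (x+h)
    have hg : ∀ t ∈ Icc x (x + h), HasDerivWithinAt (fun t => u t - t * u' x)
        (u' t - u' x) (Icc x (x + h)) t := by
      intro t ht
      exact ((hu' t (hsub ht)).mono hsub).sub
        (by simpa using (hasDerivWithinAt_id t (Icc x (x+h))).mul_const (u' x))
    have hmean := Convex.norm_image_sub_le_of_norm_hasDerivWithin_le
      (f := fun t => u t - t * u' x) (f' := fun t => u' t - u' x)
      (s := Icc x (x + h)) hg (fun t ht => by simpa using lip t ht)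
      (convex_Icc _ _) (left_mem_Icc.2 (by linarith)) (right_mem_Icc.2 (by linarith))
    have hnorm : ‖(x + h) - x‖ = h := by
      rw [Real.norm_eq_abs]; rw [show x + h - x = h by ring]; exact abs_of_pos hh
    rw [Real.norm_eq_abs, hnorm] at hmean
    have hval : (u (x+h) - (x+h) * u' x) - (u x - x * u' x)
        = u (x+h) - u x - h * u' x := by ring
    rw [hval] at hmean
    have hb1 : |u x| ≤ M0 := h0 x hx
    have hb2 : |u (x+h)| ≤ M0 := h0 (x+h) (by simp only [mem_Ici]; linarith)
    -- |h * u' x| ≤ 2 M0 + M2 h^2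
    have habs : |h * u' x| ≤ 2 * M0 + M2 * h * h := by
      have e1 := abs_le.1 hmean
      have e2 := abs_le.1 hb1
      have e3 := abs_le.1 hb2
      rw [abs_le]
      constructor <;> nlinarith [e1.1, e1.2, e2.1, e2.2, e3.1, e3.2]
    rw [abs_mul, abs_of_pos hh] at habs
    rw [div_add' _ _ _ (ne_of_gt hh), le_div_iff₀ hh]
    nlinarith [habs]
  intro x hx
  rcases eq_or_lt_of_le hM0 with hM0' | hM0'
  · -- M0 = 0
    have hz : |u' x| ≤ 0 := by
      apply le_of_forall_pos_le_add
      intro ε hε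
      rcases eq_or_lt_of_le hM2 with hM2' | hM2'
      · have := key x hx 1 one_pos
        rw [← hM0', ← hM2'] at this
        simpa using this.trans (by linarith)
      · have := key x hx (ε / M2) (div_pos hε hM2')
        rw [← hM0'] at this
        have : |u' x| ≤ M2 * (ε / M2) := by simpa using this
        rw [mul_div_cancel₀ _ (ne_of_gt hM2')] at this
        linarith
    have : u' x = 0 := abs_nonpos_iff.mp hz
    rw [this]
    nlinarith
  rcases eq_or_lt_of_le hM2 with hM2' | hM2'
  · -- M2 = 0
    have hz : |u' x| ≤ 0 := by
      apply le_of_forall_pos_le_add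
      intro ε hε
      have := key x hx (2 * M0 / ε) (div_pos (by linarith) hε)
      rw [← hM2'] at this
      have h4 : 2 * M0 / (2 * M0 / ε) = ε := by
        field_simp
      rw [h4] at this
      simpa using this
    have : u' x = 0 := abs_nonpos_iff.mp hz
    rw [this]
    nlinarith
  -- main case
  set h := Real.sqrt (2 * M0 / M2) with hhdef
  have hhpos : 0 < h := Real.sqrt_pos.2 (div_pos (by linarith) hM2')
  have hsq : h ^ 2 = 2 * M0 / M2 := Real.sq_sqrt (le_of_lt (div_pos (by linarith) hM2'))
  have hb := key x hx h hhpos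
  have hbound : 2 * M0 / h + M2 * h = 2 * M2 * h := by
    have : 2 * M0 = M2 * h ^ 2 := by
      rw [hsq]; field_simp
    rw [this]
    field_simp
    ring
  rw [hbound] at hb
  have : (u' x) ^ 2 ≤ (2 * M2 * h) ^ 2 := by
    have := sq_abs (u' x)
    nlinarith [abs_nonneg (u' x)]
  calc (u' x) ^ 2 ≤ (2 * M2 * h) ^ 2 := this
    _ = 4 * M2 ^ 2 * h ^ 2 := by ring
    _ = 4 * M2 ^ 2 * (2 * M0 / M2) := by rw [hsq]
    _ = 8 * M0 * M2 := by field_simp; ring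
    _ ≤ 32 * M0 * M2 := by nlinarith
end

section
/- Let β > 0 and let (a_j(t))_{j≥0} be nonnegative functions on [1,∞) with a₀(t) ≤ C·e^{-βt} and a_j(t)² ≤ c(j)·a_{j-1}(t)·(a_{j+1}(t) + a_j(t)) and a_j(t) ≤ c(j) for all t ≥ 1, j ≥ 1. Then for every j ≥ 1 there is C(j) with a_j(t) ≤ C(j)·e^{-(β/2ʲ)·t} for all t ≥ 1. -/
open Real

/-- Iterated interpolation (Theorem 3.5): if `a₀(t) ≤ C e^{-βt}`,
`a_j(t)² ≤ c(j) a_{j-1}(t) (a_{j+1}(t) + a_j(t))` and `a_j(t) ≤ c(j)` for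
`t ≥ 1`, `j ≥ 1`, with all `a_j ≥ 0`, then every `a_j`, `j ≥ 1`, decays
exponentially at rate `β/2ʲ`: there is `C(j)` with
`a_j(t) ≤ C(j) e^{-(β/2ʲ) t}` for `t ≥ 1`. -/
theorem stmt_14 (β C : ℝ) (hβ : 0 < β) (hC : 0 < C)
    (c : ℕ → ℝ) (hc : ∀ j, 0 < c j)
    (a : ℕ → ℝ → ℝ)
    (hnonneg : ∀ j, ∀ t : ℝ, 1 ≤ t → 0 ≤ a j t)
    (h0 : ∀ t : ℝ, 1 ≤ t → a 0 t ≤ C * Real.exp (-β * t))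
    (hinterp : ∀ j : ℕ, 1 ≤ j → ∀ t : ℝ, 1 ≤ t →
      (a j t) ^ 2 ≤ c j * a (j - 1) t * (a (j + 1) t + a j t))
    (hbdd : ∀ j : ℕ, 1 ≤ j → ∀ t : ℝ, 1 ≤ t → a j t ≤ c j) :
    ∀ j : ℕ, 1 ≤ j → ∃ Cj : ℝ, 0 < Cj ∧
      ∀ t : ℝ, 1 ≤ t → a j t ≤ Cj * Real.exp (-(β / 2 ^ j) * t) := by
  have main : ∀ j : ℕ, ∃ Cj : ℝ, 0 < Cj ∧
      ∀ t : ℝ, 1 ≤ t → a j t ≤ Cj * Real.exp (-(β / 2 ^ j) * t) := by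
    intro j
    induction j with
    | zero =>
      refine ⟨C, hC, fun t ht => ?_⟩
      simpa using h0 t ht
    | succ j ih =>
      obtain ⟨Cj, hCj, hdecay⟩ := ih
      set K := c (j + 1) * Cj * (c (j + 2) + c (j + 1)) with hK
      have hKpos : 0 < K := by
        have := hc (j + 1); have := hc (j + 2)
        positivity
      refine ⟨Real.sqrt K, Real.sqrt_pos.mpr hKpos, fun t ht => ?_⟩
      have hsum : a (j + 1 + 1) t + a (j + 1) t ≤ c (j + 2) + c (j + 1) := by
        have h1 := hbdd (j + 2) (by omega) t ht
        have h2 := hbdd (j + 1) (by omega) t ht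
        linarith
      have hsq := hinterp (j + 1) (by omega) t ht
      simp only [Nat.add_sub_cancel] at hsq
      have haj := hdecay t ht
      have hE : (0:ℝ) < Real.exp (-(β / 2 ^ j) * t) := Real.exp_pos _
      have hsumnn : 0 ≤ a (j + 1 + 1) t + a (j + 1) t := by
        have := hnonneg (j + 2) t ht; have := hnonneg (j + 1) t ht; linarith
      have hstep : (a (j + 1) t) ^ 2 ≤ K * Real.exp (-(β / 2 ^ j) * t) := by
        have h1 : c (j + 1) * a j t * (a (j + 1 + 1) t + a (j + 1) t)
            ≤ c (j + 1) * (Cj * Real.exp (-(β / 2 ^ j) * t)) * (c (j + 2) + c (j + 1)) := by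
          have hcp := (hc (j + 1)).le
          have hajnn := hnonneg j t ht
          have := mul_le_mul (mul_le_mul_of_nonneg_left haj hcp) hsum hsumnn
            (by positivity)
          linarith
        calc (a (j + 1) t) ^ 2 ≤ _ := hsq
          _ ≤ _ := h1
          _ = K * Real.exp (-(β / 2 ^ j) * t) := by ring
      have hexp : Real.exp (-(β / 2 ^ j) * t)
          = (Real.exp (-(β / 2 ^ (j + 1)) * t)) ^ 2 := by
        rw [← Real.exp_nat_mul]
        congr 1
        have : (2:ℝ) ^ (j + 1) = 2 * 2 ^ j := by ring
        rw [this]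
        field_simp
        ring
      have hgoal : (a (j + 1) t) ^ 2 ≤ (Real.sqrt K * Real.exp (-(β / 2 ^ (j + 1)) * t)) ^ 2 := by
        rw [mul_pow, Real.sq_sqrt hKpos.le, ← hexp]
        exact hstep
      have hrhs : 0 ≤ Real.sqrt K * Real.exp (-(β / 2 ^ (j + 1)) * t) := by positivity
      calc a (j + 1) t = Real.sqrt ((a (j + 1) t) ^ 2) := (Real.sqrt_sq (hnonneg (j+1) t ht)).symm
        _ ≤ Real.sqrt ((Real.sqrt K * Real.exp (-(β / 2 ^ (j + 1)) * t)) ^ 2) :=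
            Real.sqrt_le_sqrt hgoal
        _ = _ := Real.sqrt_sq hrhs
  exact fun j _ => main j
end
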